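/- arXiv:2405.17151 — 4 statements merged into one kernel-verified Lean document; each statement's English description precedes it below -/
import Mathlib

section
/- Let T, Y be Bernoulli random variables, X a random variable, and f a measurable function into [0,1]. Suppose (i) the conditional distributions of (X,Y) given T=t equal the interventional distributions (ignorability), (ii) the thresholded predictor 1_{[k,1]}(f(X)) equals f(X) almost surely for some threshold k in [0,1], and (iii) the classification accuracy satisfies P(1_{[k,1]}(f(X)) = Y) = 1 - ε. Define the treatment effect bias TEB(f) = (E[f(X)|T=1] - E[Y|T=1]) - (E[f(X)|T=0] - E[Y|T=0]). Then |TEB(f)| ≤ ε / min(P(T=0), P(T=1)). -/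
open MeasureTheory ProbabilityTheory Set

/-!
Write `g = f ∘ X - Y` for the prediction error. Since `f ∘ X` is a.s. the thresholded
prediction, `g` vanishes a.s. on the event of a correct classification and `|g| ≤ 1`
everywhere, so `∫ |g| ≤ ε`. The treatment effect bias is the difference of the
conditional means of `g` on `{T = 1}` and on its complement `{T = 0}`; each of them is bounded
by the integral of `|g|` over the event divided by its probability, and the two integrals
add up to `∫ |g|`.
-/

section ConditionalIntegral

variable {Ω : Type*} [MeasurableSpace Ω] {μ : Measure Ω} {s : Set Ω} {g : Ω → ℝ}

theorem integral_cond_eq_setIntegral_div :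
    ∫ x, g x ∂μ[|s] = (∫ x in s, g x ∂μ) / μ.real s := by
  rw [ProbabilityTheory.cond, integral_smul_measure, smul_eq_mul, ENNReal.toReal_inv,
    measureReal_def, inv_mul_eq_div]

theorem abs_integral_cond_le :
    |∫ x, g x ∂μ[|s]| ≤ (∫ x in s, |g x| ∂μ) / μ.real s := by
  rw [integral_cond_eq_setIntegral_div, abs_div, abs_of_nonneg measureReal_nonneg]
  gcongr
  exact abs_integral_le_integral_abs

theorem abs_integral_cond_sub_integral_cond_compl_le [IsFiniteMeasure μ]
    (hs : MeasurableSet s) (hμs : μ s ≠ 0) (hμsc : μ sᶜ ≠ 0) (hg : Integrable g μ) :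
    |∫ x, g x ∂μ[|s] - ∫ x, g x ∂μ[|sᶜ]| ≤
      (∫ x, |g x| ∂μ) / min (μ.real sᶜ) (μ.real s) := by
  have hpos : 0 < min (μ.real sᶜ) (μ.real s) :=
    lt_min (ENNReal.toReal_pos hμsc (measure_ne_top μ _))
      (ENNReal.toReal_pos hμs (measure_ne_top μ _))
  have hs_nonneg : 0 ≤ ∫ x in s, |g x| ∂μ := integral_nonneg fun _ => abs_nonneg _
  have hsc_nonneg : 0 ≤ ∫ x in sᶜ, |g x| ∂μ := integral_nonneg fun _ => abs_nonneg _
  calc |∫ x, g x ∂μ[|s] - ∫ x, g x ∂μ[|sᶜ]|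
      ≤ |∫ x, g x ∂μ[|s]| + |∫ x, g x ∂μ[|sᶜ]| := abs_sub _ _
    _ ≤ (∫ x in s, |g x| ∂μ) / μ.real s + (∫ x in sᶜ, |g x| ∂μ) / μ.real sᶜ :=
        add_le_add abs_integral_cond_le abs_integral_cond_le
    _ ≤ (∫ x in s, |g x| ∂μ) / min (μ.real sᶜ) (μ.real s) +
          (∫ x in sᶜ, |g x| ∂μ) / min (μ.real sᶜ) (μ.real s) := by
        gcongr
        exacts [min_le_right _ _, min_le_left _ _]
    _ = (∫ x, |g x| ∂μ) / min (μ.real sᶜ) (μ.real s) := by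
        rw [← add_div, integral_add_compl hs hg.abs]

end ConditionalIntegral

theorem integral_abs_le_measureReal_compl {Ω : Type*} [MeasurableSpace Ω] {μ : Measure Ω}
    [IsFiniteMeasure μ] {S : Set Ω} {g : Ω → ℝ} (hS : MeasurableSet S)
    (hg : ∀ x, |g x| ≤ 1) (hgS : ∀ᵐ x ∂μ, x ∈ S → g x = 0) :
    ∫ x, |g x| ∂μ ≤ μ.real Sᶜ := by
  rw [← integral_indicator_one hS.compl]
  refine integral_mono_of_nonneg (.of_forall fun _ => abs_nonneg _)
    ((integrable_const 1).indicator hS.compl) ?_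
  filter_upwards [hgS] with x hx
  by_cases hxS : x ∈ S
  · rw [hx hxS, abs_zero]
    exact indicator_nonneg (fun _ _ => zero_le_one) x
  · simpa [indicator_of_mem (mem_compl hxS)] using hg x

theorem teb_le_acc_bound_general {Ω E : Type*} [MeasurableSpace Ω] [MeasurableSpace E]
    (μ : Measure Ω) [IsProbabilityMeasure μ]
    (T Y : Ω → ℝ) (X : Ω → E) (f : E → ℝ) (k ε : ℝ)
    (hTval : ∀ ω, T ω = 0 ∨ T ω = 1) (hYval : ∀ ω, Y ω = 0 ∨ Y ω = 1)
    (hTm : Measurable T) (hYm : Measurable Y) (hXm : Measurable X)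
    (hfm : Measurable f) (hf01 : ∀ x, f x ∈ Icc (0 : ℝ) 1)
    (hT1 : 0 < μ {ω | T ω = 1}) (hT0 : 0 < μ {ω | T ω = 0})
    (hdisc : ∀ᵐ ω ∂μ, (if k ≤ f (X ω) then (1 : ℝ) else 0) = f (X ω))
    (hacc : (μ {ω | (if k ≤ f (X ω) then (1 : ℝ) else 0) = Y ω}).toReal = 1 - ε) :
    |((∫ ω, f (X ω) ∂μ[|{ω | T ω = 1}]) - ∫ ω, Y ω ∂μ[|{ω | T ω = 1}]) -
        ((∫ ω, f (X ω) ∂μ[|{ω | T ω = 0}]) - ∫ ω, Y ω ∂μ[|{ω | T ω = 0}])| ≤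
      ε / min (μ {ω | T ω = 0}).toReal (μ {ω | T ω = 1}).toReal := by
  have hY01 (ω : Ω) : Y ω ∈ Icc (0 : ℝ) 1 := by rcases hYval ω with h | h <;> simp [h]
  have hT0_eq : {ω | T ω = 0} = {ω | T ω = 1}ᶜ := by
    ext ω; rcases hTval ω with h | h <;> simp [h]
  set correct := {ω | (if k ≤ f (X ω) then (1 : ℝ) else 0) = Y ω}
  have hcorrect : MeasurableSet correct :=
    measurableSet_eq_fun (Measurable.ite (measurableSet_le measurable_const (hfm.comp hXm))
      measurable_const measurable_const) hYm
  have herror : μ.real correctᶜ = ε := by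
    rw [probReal_compl_eq_one_sub hcorrect, measureReal_def, hacc, sub_sub_cancel]
  have hint : ∀ (ν : Measure Ω) [IsFiniteMeasure ν],
      Integrable (fun ω => f (X ω)) ν ∧ Integrable Y ν := fun ν _ =>
    ⟨.of_mem_Icc 0 1 (hfm.comp hXm).aemeasurable (.of_forall fun ω => hf01 (X ω)),
      .of_mem_Icc 0 1 hYm.aemeasurable (.of_forall hY01)⟩
  simp only [← integral_sub (hint _).1 (hint _).2, ← measureReal_def, hT0_eq] at hT0 ⊢
  calc _ ≤ (∫ ω, |f (X ω) - Y ω| ∂μ) /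
          min (μ.real {ω | T ω = 1}ᶜ) (μ.real {ω | T ω = 1}) :=
        abs_integral_cond_sub_integral_cond_compl_le (hTm (measurableSet_singleton 1))
          hT1.ne' hT0.ne' ((hint μ).1.sub (hint μ).2)
    _ ≤ ε / min (μ.real {ω | T ω = 1}ᶜ) (μ.real {ω | T ω = 1}) := by
        gcongr
        rw [← herror]
        refine integral_abs_le_measureReal_compl hcorrect
          (fun ω => abs_sub_le_of_nonneg_of_le (hf01 _).1 (hf01 _).2 (hY01 ω).1 (hY01 ω).2) ?_
        filter_upwards [hdisc] with ω hω hωc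
        rw [← hω, hωc, sub_self]

/-- accuracy vs treatment effect bias bound. -/
theorem teb_le_acc_bound {Ω E : Type*} [MeasurableSpace Ω] [MeasurableSpace E]
    (μ : Measure Ω) [IsProbabilityMeasure μ]
    (T Y : Ω → ℝ) (X : Ω → E) (f : E → ℝ) (k ε : ℝ)
    (hTval : ∀ ω, T ω = 0 ∨ T ω = 1) (hYval : ∀ ω, Y ω = 0 ∨ Y ω = 1)
    (hTm : Measurable T) (hYm : Measurable Y) (hXm : Measurable X)
    (hfm : Measurable f) (hf01 : ∀ x, f x ∈ Icc (0 : ℝ) 1)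
    (hk : k ∈ Icc (0 : ℝ) 1)
    (hT1 : 0 < μ {ω | T ω = 1}) (hT0 : 0 < μ {ω | T ω = 0})
    (hdisc : ∀ᵐ ω ∂μ, (if k ≤ f (X ω) then (1 : ℝ) else 0) = f (X ω))
    (hε : ε ∈ Icc (0 : ℝ) 1)
    (hacc : (μ {ω | (if k ≤ f (X ω) then (1 : ℝ) else 0) = Y ω}).toReal = 1 - ε) :
    |((∫ ω, f (X ω) ∂μ[|{ω | T ω = 1}]) - ∫ ω, Y ω ∂μ[|{ω | T ω = 1}]) -
        ((∫ ω, f (X ω) ∂μ[|{ω | T ω = 0}]) - ∫ ω, Y ω ∂μ[|{ω | T ω = 0}])| ≤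
      ε / min (μ {ω | T ω = 0}).toReal (μ {ω | T ω = 1}).toReal :=
  teb_le_acc_bound_general μ T Y X f k ε hTval hYval hTm hYm hXm hfm hf01 hT1 hT0 hdisc hacc
end

section
/- Let T be Bernoulli and Y binary, with f: X-space → [0,1]. For t ∈ {0,1} let ε_t = E[f(X) - Y | T = t]. Then the misclassification probability ε = P(1_{[k,1]}(f(X)) ≠ Y) satisfies ε ≥ |ε_0|·P(T=0) + |ε_1|·P(T=1) − E[|1_{[k,1]}(f(X)) − f(X)|]. -/
/-!
Conditioning on `{T = t}` and multiplying by `P(T = t)` turns `ε_t` into the restricted integral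
`∫_{T = t} (f(X) - Y)`. As the events `{T = 0}` and `{T = 1}` are disjoint, the two weighted
biases add up to at most `E|f(X) - Y|`, and the pointwise triangle inequality through the
thresholded classifier `g = 1_{[k,1]}(f(X))` bounds this by `E|g - f(X)| + E|g - Y|`.
Since `g` and `Y` are `{0, 1}`-valued, `|g - Y|` is the indicator of `{g ≠ Y}`, so `E|g - Y| = ε`.
-/

open MeasureTheory ProbabilityTheory Set

section

variable {Ω : Type*} [MeasurableSpace Ω] {μ : Measure Ω}

theorem measureReal_smul_integral_cond {E : Type*} [NormedAddCommGroup E] [NormedSpace ℝ E]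
    {s : Set Ω} (hs : μ s ≠ ⊤) (h : Ω → E) :
    μ.real s • ∫ x, h x ∂μ[|s] = ∫ x in s, h x ∂μ := by
  by_cases hs0 : μ s = 0
  · simp [Measure.real, hs0]
  · rw [ProbabilityTheory.cond, integral_smul_measure, smul_smul, ENNReal.toReal_inv,
      Measure.real, mul_inv_cancel₀ (ENNReal.toReal_ne_zero.mpr ⟨hs0, hs⟩), one_smul]

theorem norm_setIntegral_add_norm_setIntegral_le {E : Type*} [NormedAddCommGroup E]
    [NormedSpace ℝ E] {s t : Set Ω} (hst : Disjoint s t) (ht : MeasurableSet t) {h : Ω → E}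
    (hh : Integrable h μ) :
    ‖∫ x in s, h x ∂μ‖ + ‖∫ x in t, h x ∂μ‖ ≤ ∫ x, ‖h x‖ ∂μ :=
  calc ‖∫ x in s, h x ∂μ‖ + ‖∫ x in t, h x ∂μ‖
      ≤ (∫ x in s, ‖h x‖ ∂μ) + ∫ x in t, ‖h x‖ ∂μ :=
        add_le_add (norm_integral_le_integral_norm _) (norm_integral_le_integral_norm _)
    _ = ∫ x in s ∪ t, ‖h x‖ ∂μ :=
        (setIntegral_union hst ht hh.norm.integrableOn hh.norm.integrableOn).symm
    _ ≤ ∫ x, ‖h x‖ ∂μ := setIntegral_le_integral hh.norm (ae_of_all _ fun _ => norm_nonneg _)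

theorem integral_abs_sub_eq_measureReal_ne {g Y : Ω → ℝ} (hg : Measurable g) (hY : Measurable Y)
    (hg01 : ∀ ω, g ω = 0 ∨ g ω = 1) (hY01 : ∀ ω, Y ω = 0 ∨ Y ω = 1) :
    ∫ ω, |g ω - Y ω| ∂μ = μ.real {ω | g ω ≠ Y ω} := by
  have hind : (fun ω => |g ω - Y ω|) = {ω | g ω ≠ Y ω}.indicator 1 := by
    funext ω
    rcases hg01 ω with h | h <;> rcases hY01 ω with h' | h' <;> simp [h, h']
  have hne : MeasurableSet {ω | g ω ≠ Y ω} := (measurableSet_eq_fun hg hY).compl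
  rw [hind, integral_indicator_one hne]

theorem MeasureTheory.Integrable.of_eq_zero_or_eq_one [IsFiniteMeasure μ] {u : Ω → ℝ}
    (hu : Measurable u) (h01 : ∀ ω, u ω = 0 ∨ u ω = 1) : Integrable u μ :=
  .of_mem_Icc 0 1 hu.aemeasurable <| ae_of_all _ fun ω => by rcases h01 ω with h | h <;> simp [h]

theorem abs_integral_cond_add_abs_integral_cond_sub_le [IsFiniteMeasure μ] {p g Y : Ω → ℝ}
    {s t : Set Ω} (hst : Disjoint s t) (ht : MeasurableSet t) (hp : Integrable p μ)
    (hg : Measurable g) (hY : Measurable Y) (hg01 : ∀ ω, g ω = 0 ∨ g ω = 1)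
    (hY01 : ∀ ω, Y ω = 0 ∨ Y ω = 1) :
    |∫ ω, (p ω - Y ω) ∂μ[|s]| * μ.real s + |∫ ω, (p ω - Y ω) ∂μ[|t]| * μ.real t -
      ∫ ω, |g ω - p ω| ∂μ ≤ μ.real {ω | g ω ≠ Y ω} := by
  have hgi : Integrable g μ := .of_eq_zero_or_eq_one hg hg01
  have hYi : Integrable Y μ := .of_eq_zero_or_eq_one hY hY01
  have weighted_bias (r : Set Ω) :
      |∫ ω, (p ω - Y ω) ∂μ[|r]| * μ.real r = |∫ ω in r, (p ω - Y ω) ∂μ| := by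
    rw [← measureReal_smul_integral_cond (measure_ne_top _ _), smul_eq_mul, abs_mul,
      abs_of_nonneg measureReal_nonneg, mul_comm]
  have biases := norm_setIntegral_add_norm_setIntegral_le (h := fun ω => p ω - Y ω) hst ht
    (hp.sub hYi)
  have triangle : ∫ ω, |p ω - Y ω| ∂μ ≤ (∫ ω, |g ω - p ω| ∂μ) + ∫ ω, |g ω - Y ω| ∂μ :=
    calc ∫ ω, |p ω - Y ω| ∂μ ≤ ∫ ω, (|g ω - p ω| + |g ω - Y ω|) ∂μ :=
          integral_mono (hp.sub hYi).abs ((hgi.sub hp).abs.add (hgi.sub hYi).abs) fun ω => by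
            simpa only [abs_sub_comm (p ω) (g ω)] using abs_sub_le (p ω) (g ω) (Y ω)
      _ = _ := integral_add (hgi.sub hp).abs (hgi.sub hYi).abs
  simp only [Real.norm_eq_abs] at biases
  rw [weighted_bias, weighted_bias, ← integral_abs_sub_eq_measureReal_ne hg hY hg01 hY01]
  linarith

end

theorem misclassification_lower_bound_general {Ω E : Type*} [MeasurableSpace Ω] [MeasurableSpace E]
    (μ : Measure Ω) [IsProbabilityMeasure μ]
    (T Y : Ω → ℝ) (X : Ω → E) (f : E → ℝ) (k ε : ℝ)
    (hYval : ∀ ω, Y ω = 0 ∨ Y ω = 1)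
    (hTm : Measurable T) (hYm : Measurable Y) (hXm : Measurable X)
    (hfm : Measurable f) (hf01 : ∀ x, f x ∈ Icc (0 : ℝ) 1)
    (hε : (μ {ω | (if k ≤ f (X ω) then (1 : ℝ) else 0) ≠ Y ω}).toReal = ε) :
    |∫ ω, (f (X ω) - Y ω) ∂μ[|{ω | T ω = 0}]| * (μ {ω | T ω = 0}).toReal +
        |∫ ω, (f (X ω) - Y ω) ∂μ[|{ω | T ω = 1}]| * (μ {ω | T ω = 1}).toReal -
        (∫ ω, |(if k ≤ f (X ω) then (1 : ℝ) else 0) - f (X ω)| ∂μ) ≤ ε := by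
  have hfXm : Measurable fun ω => f (X ω) := hfm.comp hXm
  have hfXi : Integrable (fun ω => f (X ω)) μ :=
    .of_mem_Icc 0 1 hfXm.aemeasurable (ae_of_all _ fun ω => hf01 (X ω))
  have hgm : Measurable fun ω => if k ≤ f (X ω) then (1 : ℝ) else 0 :=
    .ite (measurableSet_le measurable_const hfXm) measurable_const measurable_const
  have hg01 (ω : Ω) : (if k ≤ f (X ω) then (1 : ℝ) else 0) = 0 ∨
      (if k ≤ f (X ω) then (1 : ℝ) else 0) = 1 := by
    by_cases h : k ≤ f (X ω) <;> simp [h]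
  have hdisj : Disjoint {ω | T ω = 0} {ω | T ω = 1} :=
    disjoint_left.mpr fun ω h0 h1 => zero_ne_one (h0.symm.trans h1)
  exact hε ▸ abs_integral_cond_add_abs_integral_cond_sub_le hdisj
    (hTm (measurableSet_singleton 1)) hfXi hgm hYm hg01 hYval

/-- the misclassification probability lower-bounds the weighted sum of
conditional biases minus the discretization error. -/
theorem misclassification_lower_bound {Ω E : Type*} [MeasurableSpace Ω] [MeasurableSpace E]
    (μ : Measure Ω) [IsProbabilityMeasure μ]
    (T Y : Ω → ℝ) (X : Ω → E) (f : E → ℝ) (k ε : ℝ)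
    (hTval : ∀ ω, T ω = 0 ∨ T ω = 1) (hYval : ∀ ω, Y ω = 0 ∨ Y ω = 1)
    (hTm : Measurable T) (hYm : Measurable Y) (hXm : Measurable X)
    (hfm : Measurable f) (hf01 : ∀ x, f x ∈ Icc (0 : ℝ) 1)
    (hk : k ∈ Icc (0 : ℝ) 1)
    (hT1 : 0 < μ {ω | T ω = 1}) (hT0 : 0 < μ {ω | T ω = 0})
    (hε : (μ {ω | (if k ≤ f (X ω) then (1 : ℝ) else 0) ≠ Y ω}).toReal = ε) :
    |∫ ω, (f (X ω) - Y ω) ∂μ[|{ω | T ω = 0}]| * (μ {ω | T ω = 0}).toReal +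
        |∫ ω, (f (X ω) - Y ω) ∂μ[|{ω | T ω = 1}]| * (μ {ω | T ω = 1}).toReal -
        (∫ ω, |(if k ≤ f (X ω) then (1 : ℝ) else 0) - f (X ω)| ∂μ) ≤ ε :=
  misclassification_lower_bound_general μ T Y X f k ε hYval hTm hYm hXm hfm hf01 hε
end

section
/- In the Gaussian SCM above, the associational difference AD_{Y,T} = E[Y|T=1] − E[Y|T=0] equals Φ(1/√(2+σ_Y²)) − 1/2, which is strictly positive and strictly decreasing in σ_Y² > 0. -/
open MeasureTheory ProbabilityTheory Set

noncomputable def stdGaussCDF (z : ℝ) : ℝ := ((gaussianReal 0 1) (Iic z)).toReal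

/-!
The noise `S = W + N_X + N_Y` is independent of `T` and, as a sum of independent centred
Gaussians, has law `N(0, 2 + σ_Y²)`. Conditioning on `T = c` therefore leaves the law of `S`
unchanged, so `E[Y | T = c] = P(S ≥ -c) = Φ(c / √(2 + σ_Y²))`. The difference of the cases
`c = 1` and `c = 0` is `Φ(1 / √(2 + σ_Y²)) - Φ(0)`, with `Φ(0) = 1/2` by the symmetry
`Φ(-z) = 1 - Φ(z)`; positivity and monotonicity in `σ_Y²` come from the strict monotonicity of `Φ`.
-/

namespace ProbabilityTheory

variable {Ω β γ : Type*} [MeasurableSpace Ω] [MeasurableSpace β] [MeasurableSpace γ]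
  {μ : Measure Ω}

theorem IndepFun.map_cond_preimage [IsFiniteMeasure μ] {S : Ω → β} {T : Ω → γ}
    (hS : Measurable S) (hT : Measurable T) (hST : IndepFun S T μ) {t : Set γ}
    (ht : MeasurableSet t) (hμt : μ (T ⁻¹' t) ≠ 0) :
    (μ[|T ⁻¹' t]).map S = μ.map S := by
  ext s hs
  rw [Measure.map_apply hS hs, Measure.map_apply hS hs, cond_apply (hT ht), inter_comm,
    hST.measure_inter_preimage_eq_mul _ _ hs ht, mul_left_comm,
    ENNReal.inv_mul_cancel hμt (measure_ne_top _ _), mul_one]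

theorem integral_cond_threshold_of_indepFun [IsFiniteMeasure μ] {S T : Ω → ℝ}
    (hS : Measurable S) (hT : Measurable T) (hST : IndepFun S T μ) {c : ℝ}
    (hc : μ {ω | T ω = c} ≠ 0) :
    ∫ ω, (if 0 ≤ T ω + S ω then 1 else 0 : ℝ) ∂μ[|{ω | T ω = c}]
      = (μ.map S).real (Ici (-c)) := by
  have hcm : MeasurableSet {ω | T ω = c} := hT (measurableSet_singleton c)
  have hthreshold : (fun ω => if 0 ≤ T ω + S ω then (1 : ℝ) else 0)
      =ᵐ[μ[|{ω | T ω = c}]] (S ⁻¹' Ici (-c)).indicator 1 := by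
    filter_upwards [ae_cond_mem hcm] with ω (hω : T ω = c)
    simp only [indicator, mem_preimage, mem_Ici, Pi.one_apply, hω, neg_le_iff_add_nonneg']
  rw [integral_congr_ae hthreshold, integral_indicator_one (hS measurableSet_Ici),
    ← map_measureReal_apply hS measurableSet_Ici]
  exact congrArg (·.real (Ici (-c))) (hST.map_cond_preimage hS hT (measurableSet_singleton c) hc)

theorem measure_setOf_eq_zero_ne_zero [IsProbabilityMeasure μ] {T : Ω → ℝ} (hT : Measurable T)
    (hTval : ∀ ω, T ω = 0 ∨ T ω = 1) (h1 : μ {ω | T ω = 1} ≠ 1) : μ {ω | T ω = 0} ≠ 0 := by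
  have hcompl : {ω | T ω = 0} = {ω | T ω = 1}ᶜ := by
    ext ω
    rcases hTval ω with h | h <;> simp [h]
  rwa [hcompl, Ne, prob_compl_eq_zero_iff (s := {ω | T ω = 1}) (hT (measurableSet_singleton 1))]

end ProbabilityTheory

section StandardGaussian

variable {v : NNReal}

theorem gaussianReal_Ici_eq_Iic_neg (r : ℝ) :
    gaussianReal 0 v (Ici r) = gaussianReal 0 v (Iic (-r)) := by
  conv_rhs =>
    rw [← neg_zero, ← gaussianReal_map_neg, Measure.map_apply measurable_neg measurableSet_Iic]
  simp

theorem gaussianReal_Iic_eq_std (hv : v ≠ 0) (r : ℝ) :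
    gaussianReal 0 v (Iic r) = gaussianReal 0 1 (Iic (r / √v)) := by
  have hsqrt : 0 < √(v : ℝ) := by positivity
  have hstd : (gaussianReal 0 v).map (· / √v) = gaussianReal 0 1 := by
    rw [gaussianReal_map_div_const]
    congr 1
    · simp
    · ext; simp [hv]
  rw [← hstd, Measure.map_apply (by fun_prop) measurableSet_Iic]
  congr 1
  ext x
  simp [div_le_div_iff_of_pos_right hsqrt]

theorem measureReal_gaussianReal_Ici (hv : v ≠ 0) (r : ℝ) :
    (gaussianReal 0 v).real (Ici r) = stdGaussCDF (-r / √v) := by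
  rw [measureReal_def, gaussianReal_Ici_eq_Iic_neg, gaussianReal_Iic_eq_std hv, stdGaussCDF]

theorem stdGaussCDF_neg (z : ℝ) : stdGaussCDF (-z) = 1 - stdGaussCDF z := by
  have := nullSingletonClass_gaussianReal (μ := 0) one_ne_zero
  rw [stdGaussCDF, stdGaussCDF, ← gaussianReal_Ici_eq_Iic_neg, ← measure_congr Ioi_ae_eq_Ici,
    ← compl_Iic, ← measureReal_def, ← measureReal_def, measureReal_compl measurableSet_Iic,
    probReal_univ]

theorem stdGaussCDF_zero : stdGaussCDF 0 = 1 / 2 := by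
  have := stdGaussCDF_neg 0
  rw [neg_zero] at this
  linarith

theorem stdGaussCDF_strictMono : StrictMono stdGaussCDF := by
  intro z₁ z₂ h
  have hIoc : gaussianReal 0 1 (Ioc z₁ z₂) ≠ 0 := fun h0 =>
    (by simp [h] : volume (Ioc z₁ z₂) ≠ 0) (gaussianReal_absolutelyContinuous' 0 one_ne_zero h0)
  have hdiff : stdGaussCDF z₂ - stdGaussCDF z₁ = (gaussianReal 0 1).real (Ioc z₁ z₂) := by
    rw [stdGaussCDF, stdGaussCDF, ← measureReal_def, ← measureReal_def, ← Iic_sdiff_Iic,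
      measureReal_sdiff (Iic_subset_Iic.mpr h.le) measurableSet_Iic]
  have := ENNReal.toReal_pos hIoc (measure_ne_top _ _)
  rw [← measureReal_def] at this
  linarith

theorem strictAntiOn_stdGaussCDF_one_div_sqrt {a : ℝ} (ha : 0 ≤ a) :
    StrictAntiOn (fun s : ℝ => stdGaussCDF (1 / √(a + s))) (Ioi 0) := by
  intro s hs t ht hst
  have has : 0 < a + s := by linarith [mem_Ioi.mp hs]
  exact stdGaussCDF_strictMono
    (one_div_lt_one_div_of_lt (by positivity) (Real.sqrt_lt_sqrt has.le (by linarith)))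

end StandardGaussian

theorem integral_cond_threshold_of_gaussianReal {Ω : Type*} [MeasurableSpace Ω] {μ : Measure Ω}
    [IsFiniteMeasure μ] {S T : Ω → ℝ} (hS : Measurable S) (hT : Measurable T)
    (hST : IndepFun S T μ) {v : NNReal} (hv : v ≠ 0) (hSlaw : μ.map S = gaussianReal 0 v)
    {c : ℝ} (hc : μ {ω | T ω = c} ≠ 0) :
    ∫ ω, (if 0 ≤ T ω + S ω then 1 else 0 : ℝ) ∂μ[|{ω | T ω = c}] = stdGaussCDF (c / √v) := by
  rw [integral_cond_threshold_of_indepFun hS hT hST hc, hSlaw, measureReal_gaussianReal_Ici hv,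
    neg_neg]

theorem gaussian_scm_associational_difference_general {Ω : Type*} [MeasurableSpace Ω]
    (μ : Measure Ω) [IsProbabilityMeasure μ]
    (T W N NY : Ω → ℝ) (p : ℝ) (v : NNReal) (hp0 : 0 < p) (hp1 : p < 1)
    (hTm : Measurable T) (hWm : Measurable W) (hNm : Measurable N) (hNYm : Measurable NY)
    (hTval : ∀ ω, T ω = 0 ∨ T ω = 1)
    (hT1 : (μ {ω | T ω = 1}).toReal = p)
    (hW : μ.map W = gaussianReal 0 1) (hN : μ.map N = gaussianReal 0 1)
    (hNY : μ.map NY = gaussianReal 0 v)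
    (hindep : iIndepFun ![T, W, N, NY] μ)
    (Y : Ω → ℝ)
    (hY : ∀ ω, Y ω = if 0 ≤ T ω + W ω + N ω + NY ω then 1 else 0) :
    ((∫ ω, Y ω ∂μ[|{ω | T ω = 1}]) - ∫ ω, Y ω ∂μ[|{ω | T ω = 0}]
        = stdGaussCDF (1 / Real.sqrt (2 + (v : ℝ))) - 1 / 2) ∧
      (0 < stdGaussCDF (1 / Real.sqrt (2 + (v : ℝ))) - 1 / 2) ∧
      StrictAntiOn (fun s : ℝ => stdGaussCDF (1 / Real.sqrt (2 + s)) - 1 / 2) (Ioi 0) := by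
  have hmeas : ∀ i, Measurable (![T, W, N, NY] i) := by
    intro i
    fin_cases i <;> assumption
  set S := W + N + NY
  have hSlaw : μ.map S = gaussianReal 0 (2 + v) := by
    have hWN : IndepFun W N μ := hindep.indepFun (i := 1) (j := 2) (by decide)
    have hWN_NY : IndepFun (W + N) NY μ :=
      hindep.indepFun_add_left hmeas 1 2 3 (by decide) (by decide)
    rw [gaussianReal_add_gaussianReal_of_indepFun hWN_NY
      (gaussianReal_add_gaussianReal_of_indepFun hWN hW hN) hNY]
    norm_num [one_add_one_eq_two]
  have hST : IndepFun S T μ := by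
    have h : IndepFun (∑ j ∈ {1, 2, 3}, ![T, W, N, NY] j) T μ :=
      hindep.indepFun_finsetSum_of_notMem hmeas (i := 0) (by decide)
    convert h using 1
    ext ω
    simp [S, add_assoc]
  have hYS : Y = fun ω => if 0 ≤ T ω + S ω then 1 else 0 := by
    ext ω
    simp only [hY, S, Pi.add_apply, add_assoc]
  have hE (c : ℝ) (hc : μ {ω | T ω = c} ≠ 0) :
      ∫ ω, Y ω ∂μ[|{ω | T ω = c}] = stdGaussCDF (c / √(2 + v)) := by
    rw [hYS, integral_cond_threshold_of_gaussianReal (hWm.add hNm |>.add hNYm) hTm hST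
      (by positivity) hSlaw hc, NNReal.coe_add, NNReal.coe_ofNat]
  have hμ1 : μ {ω | T ω = 1} ≠ 0 := fun h => by simp [h] at hT1; linarith
  have hμ0 : μ {ω | T ω = 0} ≠ 0 :=
    measure_setOf_eq_zero_ne_zero hTm hTval fun h => by simp [h] at hT1; linarith
  refine ⟨by rw [hE 1 hμ1, hE 0 hμ0, zero_div, stdGaussCDF_zero], ?_, ?_⟩
  · rw [sub_pos, ← stdGaussCDF_zero]
    exact stdGaussCDF_strictMono (by positivity)
  · exact fun s hs t ht hst =>
      sub_lt_sub_right (strictAntiOn_stdGaussCDF_one_div_sqrt zero_le_two hs ht hst) _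

/-- the associational difference in the Gaussian SCM equals
`Φ(1/√(2+σ_Y²)) - 1/2`, which is strictly positive and strictly decreasing in `σ_Y²`. -/
theorem gaussian_scm_associational_difference {Ω : Type*} [MeasurableSpace Ω]
    (μ : Measure Ω) [IsProbabilityMeasure μ]
    (T W N NY : Ω → ℝ) (p : ℝ) (v : NNReal) (hp0 : 0 < p) (hp1 : p < 1) (hv : v ≠ 0)
    (hTm : Measurable T) (hWm : Measurable W) (hNm : Measurable N) (hNYm : Measurable NY)
    (hTval : ∀ ω, T ω = 0 ∨ T ω = 1)
    (hT1 : (μ {ω | T ω = 1}).toReal = p)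
    (hW : μ.map W = gaussianReal 0 1) (hN : μ.map N = gaussianReal 0 1)
    (hNY : μ.map NY = gaussianReal 0 v)
    (hindep : iIndepFun ![T, W, N, NY] μ)
    (Y : Ω → ℝ)
    (hY : ∀ ω, Y ω = if 0 ≤ T ω + W ω + N ω + NY ω then 1 else 0) :
    ((∫ ω, Y ω ∂μ[|{ω | T ω = 1}]) - ∫ ω, Y ω ∂μ[|{ω | T ω = 0}]
        = stdGaussCDF (1 / Real.sqrt (2 + (v : ℝ))) - 1 / 2) ∧
      (0 < stdGaussCDF (1 / Real.sqrt (2 + (v : ℝ))) - 1 / 2) ∧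
      StrictAntiOn (fun s : ℝ => stdGaussCDF (1 / Real.sqrt (2 + s)) - 1 / 2) (Ioi 0) :=
  gaussian_scm_associational_difference_general μ T W N NY p v hp0 hp1 hTm hWm hNm hNYm hTval hT1 hW
    hN hNY hindep Y hY
end

section
/- Let Y ∈ {0,1} and f(X) ∈ {0,1} (a hard classifier) with accuracy 1−ε, i.e., P(f(X) = Y) = 1−ε, and T ~ Bernoulli(1/2) with ignorability. Then the TEB of f achieves the value 2ε when all errors are false positives in the treated group (f(X)=1, Y=0 only when T=1), showing the bound |TEB| ≤ ε/min_t P(T=t) is tight for balanced treatment. -/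
open MeasureTheory ProbabilityTheory Set

/-!
Three atoms suffice: a treated unit that is misclassified as a false positive (mass `ε`), a treated
unit with `Y = 1` that is classified correctly (mass `1/2 - ε`), and a control unit with `Y = 0`
classified correctly (mass `1/2`). On the treated group `f(X) - Y` is the indicator of the first
atom, whose conditional mass is `ε / (1/2) = 2ε`; on the control group `f(X) = Y`.
-/

section WeightedDirac

variable {α : Type*} [Fintype α] [MeasurableSpace α] [MeasurableSingletonClass α]

noncomputable def weightedDirac (w : α → ℝ) : Measure α :=
  ∑ i, ENNReal.ofReal (w i) • Measure.dirac i

variable {w : α → ℝ}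

lemma weightedDirac_apply (hw : 0 ≤ w) (s : Set α) :
    weightedDirac w s = ENNReal.ofReal (∑ i, s.indicator w i) := by
  classical
  rw [ENNReal.ofReal_sum_of_nonneg fun i _ => indicator_nonneg (fun i _ => hw i) i]
  simp [weightedDirac, Measure.dirac_apply, indicator_apply, apply_ite ENNReal.ofReal]

lemma weightedDirac_real_apply (hw : 0 ≤ w) (s : Set α) :
    (weightedDirac w).real s = ∑ i, s.indicator w i := by
  rw [measureReal_def, weightedDirac_apply hw,
    ENNReal.toReal_ofReal (Finset.sum_nonneg fun i _ => indicator_nonneg (fun i _ => hw i) i)]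

lemma isProbabilityMeasure_weightedDirac (hw : 0 ≤ w) (h1 : ∑ i, w i = 1) :
    IsProbabilityMeasure (weightedDirac w) :=
  ⟨by simp [weightedDirac_apply hw, h1]⟩

lemma integral_weightedDirac (hw : 0 ≤ w) (g : α → ℝ) :
    ∫ x, g x ∂weightedDirac w = ∑ i, w i * g i := by
  rw [weightedDirac, integral_finsetSum_measure fun i _ =>
    Integrable.of_finite.smul_measure ENNReal.ofReal_ne_top]
  simp [integral_smul_measure, ENNReal.toReal_ofReal (hw _)]

lemma integral_cond_weightedDirac (hw : 0 ≤ w) (s : Set α) (g : α → ℝ) :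
    ∫ x, g x ∂(weightedDirac w)[|s] = (∑ i, s.indicator w i)⁻¹ * ∑ i, w i * s.indicator g i := by
  rw [ProbabilityTheory.cond, integral_smul_measure, ← integral_indicator s.toFinite.measurableSet,
    integral_weightedDirac hw, ENNReal.toReal_inv, ← measureReal_def, weightedDirac_real_apply hw,
    smul_eq_mul]

end WeightedDirac

/-- tightness of the TEB bound for balanced treatment: there is a joint
distribution with `P(T=1) = 1/2`, a hard classifier of accuracy `1-ε` whose only errors
are false positives in the treated group, achieving `TEB = 2ε`. -/
theorem teb_bound_tight (ε : ℝ) (hε0 : 0 ≤ ε) (hε2 : ε ≤ 1 / 2) :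
    ∃ (Ω : Type) (_ : MeasurableSpace Ω) (μ : Measure Ω) (_ : IsProbabilityMeasure μ)
      (T X Y : Ω → ℝ) (f : ℝ → ℝ),
      Measurable T ∧ Measurable X ∧ Measurable Y ∧ Measurable f ∧
        (∀ ω, T ω = 0 ∨ T ω = 1) ∧ (∀ ω, Y ω = 0 ∨ Y ω = 1) ∧
        (∀ x, f x = 0 ∨ f x = 1) ∧
        (μ {ω | T ω = 1}).toReal = 1 / 2 ∧
        (μ {ω | f (X ω) = Y ω}).toReal = 1 - ε ∧
        (∀ ω, f (X ω) ≠ Y ω → T ω = 1 ∧ f (X ω) = 1 ∧ Y ω = 0) ∧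
        ((∫ ω, f (X ω) ∂μ[|{ω | T ω = 1}]) - ∫ ω, Y ω ∂μ[|{ω | T ω = 1}]) -
            ((∫ ω, f (X ω) ∂μ[|{ω | T ω = 0}]) - ∫ ω, Y ω ∂μ[|{ω | T ω = 0}]) = 2 * ε := by
  set w : Fin 3 → ℝ := ![ε, 1 / 2 - ε, 1 / 2]
  have hw : 0 ≤ w := by
    intro i; fin_cases i <;> simp [w] <;> linarith
  have hw1 : ∑ i, w i = 1 := by simp [w, Fin.sum_univ_three]; ring
  refine ⟨Fin 3, ⊤, weightedDirac w, isProbabilityMeasure_weightedDirac hw hw1,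
    ![1, 1, 0], ![1, 1, 0], ![0, 1, 0], ({1} : Set ℝ).indicator 1,
    .of_discrete, .of_discrete, .of_discrete, measurable_one.indicator (measurableSet_singleton 1),
    ?_, ?_, fun x => indicator_eq_zero_or_self _ _ _, ?_, ?_, ?_, ?_⟩
  · intro ω; fin_cases ω <;> simp
  · intro ω; fin_cases ω <;> simp
  · rw [← measureReal_def, weightedDirac_real_apply hw]
    simp [w, Fin.sum_univ_three, indicator]
  · rw [← measureReal_def, weightedDirac_real_apply hw]
    simp [w, Fin.sum_univ_three, indicator]
    ring
  · intro ω; fin_cases ω <;> simp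
  · simp only [integral_cond_weightedDirac hw]
    simp [w, Fin.sum_univ_three, indicator]
    field_simp
    ring
end
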